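/- Let k ≥ 2 and, for each i = 2,…,k, let B_i be a supersymmetric i-th order 2n-dimensional cubical tensor, and consider the Hamiltonian system ẋ = J ∇H(x) with H(x) = ∑_{i=2}^k B_i x^i. Let x* ∈ ℝ^{2n} be an equilibrium, i.e., J ∇H(x*) = 0. If the symmetric 2n×2n matrix ∑_{i=2}^k i(i−1) B_i (x*)^{i−2} is positive definite or negative definite, then x* is a Lyapunov stable equilibrium of this system. -/

import Mathlib

open Finset Matrix

/-- A `k`-th order cubical tensor with index set `ι` (entries `A i₁ … i_k ∈ ℝ`,
encoded as a function on index tuples). -/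
abbrev Tensor (k : ℕ) (ι : Type) : Type := (Fin k → ι) → ℝ

/-- The transpose `A^{⊤_σ}` of a tensor `A` associated with a permutation `σ`:
`(A^{⊤_σ})_{i_{σ(1)} … i_{σ(k)}} = A_{i_1 … i_k}`. -/
def tTranspose {k : ℕ} {ι : Type} (σ : Equiv.Perm (Fin k)) (A : Tensor k ι) : Tensor k ι :=
  fun i => A (i ∘ σ)

/-- A cubical tensor is supersymmetric if its entries are invariant under any
permutation of the indices. -/
def IsSupersymmetric {k : ℕ} {ι : Type} (A : Tensor k ι) : Prop :=
  ∀ σ : Equiv.Perm (Fin k), tTranspose σ A = A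

/-- The scalar `A x^k = ∑_{i_1,…,i_k} A_{i_1…i_k} x_{i_1} ⋯ x_{i_k}`. -/
def tPow {k : ℕ} {ι : Type} [Fintype ι] (A : Tensor k ι) (x : ι → ℝ) : ℝ :=
  ∑ i : Fin k → ι, A i * ∏ t, x (i t)

/-- The vector `A x^{k-1}` (here the tensor has order `k+1`):
`(A x^k)_a = ∑_{i_2,…,i_{k+1}} A_{a i_2 … i_{k+1}} x_{i_2} ⋯ x_{i_{k+1}}`. -/
def tVec {k : ℕ} {ι : Type} [Fintype ι] (A : Tensor (k + 1) ι) (x : ι → ℝ) : ι → ℝ :=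
  fun a => ∑ i : Fin k → ι, A (Fin.cons a i) * ∏ t, x (i t)

/-- The matrix `A x^{k-2}` (here the tensor has order `k+2`):
`(A x^k)_{a b} = ∑_{i_3,…,i_{k+2}} A_{a b i_3 … i_{k+2}} x_{i_3} ⋯ x_{i_{k+2}}`. -/
def tMat {k : ℕ} {ι : Type} [Fintype ι] (A : Tensor (k + 2) ι) (x : ι → ℝ) : Matrix ι ι ℝ :=
  Matrix.of fun a b => ∑ i : Fin k → ι, A (Fin.cons a (Fin.cons b i)) * ∏ t, x (i t)

/-- The matrix-tensor product `(RA)_{i_1 i_2 … i_k} = ∑_j R_{i_1 j} A_{j i_2 … i_k}`. -/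
def matMulT {k : ℕ} {ι : Type} [Fintype ι] (R : Matrix ι ι ℝ) (A : Tensor (k + 1) ι) :
    Tensor (k + 1) ι :=
  fun i => ∑ j : ι, R (i 0) j * A (Function.update i 0 j)

/-- The standard symplectic matrix `J = [[0, Iₙ], [-Iₙ, 0]]` of size `2n × 2n`,
with `ℝ^{2n}` realized as `Fin n ⊕ Fin n → ℝ`. -/
def sympJ (n : ℕ) : Matrix (Fin n ⊕ Fin n) (Fin n ⊕ Fin n) ℝ :=
  Matrix.fromBlocks 0 1 (-1) 0

/-- A cubical tensor `A` of even dimension is a Hamiltonian cubical tensor if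
`(Jᵀ A)^{⊤_σ} + J A = 0` for every permutation `σ`. -/
def IsHamiltonianTensor {k n : ℕ} (A : Tensor (k + 1) (Fin n ⊕ Fin n)) : Prop :=
  ∀ σ : Equiv.Perm (Fin (k + 1)),
    tTranspose σ (matMulT (sympJ n)ᵀ A) + matMulT (sympJ n) A = 0

/-! `H` is a first integral of `ẋ = J ∇H(x)`, because `⟪∇H, J ∇H⟫ = 0` by skew-symmetry of `J`.
Since `J` is invertible, `x*` is a critical point of `H`, and expanding `B (x* + h)^k`
binomially (which is where supersymmetry enters) shows that the Taylor polynomial of order two of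
`H` at `x*` is `½ hᵀ M h`, with `M` the given matrix. Definiteness of `M` then gives
`|H (x* + h) - H x*| ≥ c ‖h‖²` near `0`, so a trajectory starting close enough to `x*` has an
energy too close to `H x*` to ever reach a small sphere around `x*`. -/

open Filter Asymptotics Topology
open scoped Pointwise

section TensorExpansion

variable {ι : Type} [Fintype ι] {k : ℕ}

/-- `A x^{k-s} h^s`: the first `s` slots of `A` are filled with `h`, the others with `x`. -/
def tMixed (A : Tensor k ι) (x h : ι → ℝ) (s : ℕ) : ℝ :=
  ∑ j : Fin k → ι, A j * ∏ t : Fin k, if (t : ℕ) < s then h (j t) else x (j t)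

lemma IsSupersymmetric.sum_mul_prod_ite_smul_mem {A : Tensor k ι} (hA : IsSupersymmetric A)
    (x h : ι → ℝ) (σ : Equiv.Perm (Fin k)) (S : Finset (Fin k)) :
    ∑ j : Fin k → ι, A j * ∏ t, (if t ∈ σ • S then h (j t) else x (j t)) =
      ∑ j : Fin k → ι, A j * ∏ t, (if t ∈ S then h (j t) else x (j t)) := by
  refine Fintype.sum_equiv (σ.symm.arrowCongr (Equiv.refl ι)) _ _ fun j => ?_
  have hAσ : A (j ∘ σ) = A j := congrFun (hA σ) j
  have hmem : ∀ u, σ u ∈ σ • S ↔ u ∈ S := fun u => Finset.smul_mem_smul_finset_iff σ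
  change _ = A (j ∘ σ) * ∏ t, if t ∈ S then h ((j ∘ σ) t) else x ((j ∘ σ) t)
  rw [hAσ, ← Equiv.prod_comp σ]
  simp only [hmem, Function.comp_apply]

lemma IsSupersymmetric.sum_mul_prod_ite_mem {A : Tensor k ι} (hA : IsSupersymmetric A)
    (x h : ι → ℝ) (S : Finset (Fin k)) :
    ∑ j : Fin k → ι, A j * ∏ t, (if t ∈ S then h (j t) else x (j t)) = tMixed A x h #S := by
  classical
  have hcard : #{t : Fin k | (t : ℕ) < #S} = #S := by
    simpa [Fin.card_filter_val_lt] using S.card_le_univ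
  obtain ⟨σ, hσ⟩ := (Set.powersetCard.isPretransitive (α := Fin k)).exists_smul_eq
    ⟨univ.filter fun t : Fin k => (t : ℕ) < #S, hcard⟩ ⟨S, rfl⟩
  have hσS : σ • univ.filter (fun t : Fin k => (t : ℕ) < #S) = S := by
    simpa using congrArg Subtype.val hσ
  rw [← hσS, hA.sum_mul_prod_ite_smul_mem, hσS]
  simp [tMixed]

lemma IsSupersymmetric.tPow_add {A : Tensor k ι} (hA : IsSupersymmetric A) (x h : ι → ℝ) :
    tPow A (x + h) = ∑ s ∈ range (k + 1), (k.choose s : ℝ) * tMixed A x h s := by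
  classical
  calc tPow A (x + h)
      = ∑ S : Finset (Fin k), ∑ j : Fin k → ι,
          A j * ∏ t, (if t ∈ S then h (j t) else x (j t)) := by
        simp_rw [tPow, Pi.add_apply, add_comm (x _), Fintype.prod_add, prod_ite, mul_sum]
        rw [sum_comm]
        simp [filter_notMem_eq_sdiff, compl_eq_univ_sdiff]
    _ = ∑ S : Finset (Fin k), tMixed A x h #S := by simp_rw [hA.sum_mul_prod_ite_mem]
    _ = _ := by
        rw [← Finset.powerset_univ, Finset.sum_powerset_apply_card]
        simp [nsmul_eq_mul]

lemma abs_tMixed_le (A : Tensor k ι) {x h : ι → ℝ} {C r : ℝ} (hx : ∀ a, |x a| ≤ C)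
    (hh : ∀ a, |h a| ≤ r) {s : ℕ} (hs : s ≤ k) :
    |tMixed A x h s| ≤ (∑ j, |A j|) * (r ^ s * C ^ (k - s)) := by
  have hcard : #{t : Fin k | (t : ℕ) < s} = s := by simpa [Fin.card_filter_val_lt] using hs
  have hcard' : #{t : Fin k | ¬ (t : ℕ) < s} = k - s := by
    have := card_filter_add_card_filter_not (s := univ) (fun t : Fin k => (t : ℕ) < s)
    simp only [card_univ, Fintype.card_fin, hcard] at this
    omega
  calc |tMixed A x h s|
      ≤ ∑ j : Fin k → ι, |A j| * ∏ t : Fin k, (if (t : ℕ) < s then r else C) := by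
        refine (abs_sum_le_sum_abs _ _).trans (sum_le_sum fun j _ => ?_)
        rw [abs_mul, abs_prod]
        refine mul_le_mul_of_nonneg_left (prod_le_prod (fun _ _ => abs_nonneg _) fun t _ => ?_)
          (abs_nonneg _)
        split_ifs
        · exact hh _
        · exact hx _
    _ = (∑ j, |A j|) * (r ^ s * C ^ (k - s)) := by
        rw [Finset.prod_ite, prod_const, prod_const, hcard, hcard', sum_mul]

lemma sum_arrow_fin_succ {M : Type*} [AddCommMonoid M] (f : (Fin (k + 1) → ι) → M) :
    ∑ j, f j = ∑ a, ∑ i : Fin k → ι, f (Fin.cons a i) :=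
  (Fintype.sum_equiv (Fin.consEquiv fun _ => ι) _ _ fun _ => rfl).symm.trans
    (Fintype.sum_prod_type _)

lemma tMixed_zero (A : Tensor k ι) (x h : ι → ℝ) : tMixed A x h 0 = tPow A x := by
  simp [tMixed, tPow]

lemma tMixed_one (A : Tensor (k + 1) ι) (x h : ι → ℝ) : tMixed A x h 1 = tVec A x ⬝ᵥ h := by
  simp only [tMixed, tVec, dotProduct, sum_mul, sum_arrow_fin_succ, Fin.prod_univ_succ]
  refine sum_congr rfl fun a _ => sum_congr rfl fun i _ => ?_
  simp only [Fin.val_zero, Fin.val_succ, Fin.cons_zero, Fin.cons_succ, zero_lt_one, ↓reduceIte,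
    Nat.succ_lt_succ_iff, Nat.not_lt_zero]
  ring

lemma tMixed_two (A : Tensor (k + 2) ι) (x h : ι → ℝ) :
    tMixed A x h 2 = h ⬝ᵥ tMat A x *ᵥ h := by
  simp only [tMixed, tMat, dotProduct, mulVec, of_apply, mul_sum, sum_mul, sum_arrow_fin_succ,
    Fin.prod_univ_succ]
  refine sum_congr rfl fun a _ => sum_congr rfl fun b _ => sum_congr rfl fun i _ => ?_
  simp only [Fin.val_zero, Fin.val_succ, Fin.succ_zero_eq_one, Fin.val_one, Fin.cons_zero,
    Fin.cons_one, Fin.cons_succ, Nat.ofNat_pos, one_lt_two, ↓reduceIte, Nat.succ_lt_succ_iff,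
    Nat.not_lt_zero]
  ring

end TensorExpansion

lemma isBigO_norm_pow_norm_pow_of_le {E : Type*} [SeminormedAddCommGroup E] {d s : ℕ}
    (hds : d ≤ s) : (fun h : E => ‖h‖ ^ s) =O[𝓝 0] fun h => ‖h‖ ^ d := by
  rcases hds.eq_or_lt with rfl | hlt
  · exact isBigO_refl _ _
  · exact (isLittleO_norm_pow_norm_pow hlt).isBigO

section TensorCalculus

variable {ι : Type} [Fintype ι]

local notation "𝔼" => EuclideanSpace ℝ ι

lemma isBigO_tMixed {k : ℕ} (A : Tensor k ι) (y : 𝔼) (l : Filter 𝔼) {s : ℕ} (hs : s ≤ k) :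
    (fun h : 𝔼 => tMixed A y h s) =O[l] fun h => ‖h‖ ^ s := by
  have hcoord : ∀ (v : 𝔼) a, |v a| ≤ ‖v‖ := fun v a =>
    (Real.norm_eq_abs _).symm.le.trans (PiLp.norm_apply_le v a)
  refine IsBigO.of_bound ((∑ j, |A j|) * ‖y‖ ^ (k - s)) (Eventually.of_forall fun h => ?_)
  rw [Real.norm_eq_abs, norm_pow, norm_norm]
  calc |tMixed A y h s| ≤ (∑ j, |A j|) * (‖h‖ ^ s * ‖y‖ ^ (k - s)) :=
        abs_tMixed_le A (hcoord y) (hcoord h) hs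
    _ = _ := by ring

lemma IsSupersymmetric.isBigO_tPow_add_sub_sum {k : ℕ} {A : Tensor k ι}
    (hA : IsSupersymmetric A) (y : 𝔼) {d : ℕ} (hd : d ≤ k + 1) :
    (fun h : 𝔼 =>
      tPow A (y + h) - ∑ s ∈ range d, (k.choose s : ℝ) * tMixed A y h s) =O[𝓝 0]
      fun h => ‖h‖ ^ d := by
  have htail : ∀ h : 𝔼,
      tPow A (y + h) - ∑ s ∈ range d, (k.choose s : ℝ) * tMixed A y h s =
        ∑ s ∈ Ico d (k + 1), (k.choose s : ℝ) * tMixed A y h s := by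
    intro h
    rw [hA.tPow_add, ← sum_range_add_sum_Ico _ hd, add_sub_cancel_left]
  simp_rw [htail]
  refine IsBigO.fun_sum fun s hs => ?_
  obtain ⟨hds, hsk⟩ := mem_Ico.1 hs
  exact ((isBigO_tMixed A y _ (Nat.lt_succ_iff.1 hsk)).const_mul_left _).trans
    (isBigO_norm_pow_norm_pow_of_le hds)

lemma IsSupersymmetric.hasGradientAt_tPow {k : ℕ} {A : Tensor (k + 1) ι}
    (hA : IsSupersymmetric A) (y : 𝔼) :
    HasGradientAt (fun w : 𝔼 => tPow A w) (((k + 1 : ℕ) : ℝ) • WithLp.toLp 2 (tVec A y)) y := by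
  rw [hasGradientAt_iff_isLittleO_nhds_zero]
  refine ((hA.isBigO_tPow_add_sub_sum y (d := 2) (by omega)).trans_isLittleO
    (isLittleO_norm_pow_id one_lt_two)).congr_left fun h => ?_
  simp only [sum_range_succ, range_one, sum_singleton, Nat.choose_zero_right, Nat.choose_one_right,
    Nat.cast_one, one_mul, tMixed_zero, tMixed_one, WithLp.ofLp_add, WithLp.ofLp_smul,
    EuclideanSpace.inner_eq_star_dotProduct, star_trivial, dotProduct_comm, dotProduct_smul,
    smul_eq_mul]
  ring

lemma IsSupersymmetric.isBigO_tPow_add_sub_quadratic {k : ℕ} {A : Tensor (k + 2) ι}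
    (hA : IsSupersymmetric A) (y : 𝔼) :
    (fun h : 𝔼 => tPow A (y + h) - tPow A y -
        inner ℝ (((k + 2 : ℕ) : ℝ) • WithLp.toLp 2 (tVec A y)) h -
        ((k + 2).choose 2 : ℝ) * (h ⬝ᵥ tMat A y *ᵥ h)) =O[𝓝 0] fun h => ‖h‖ ^ 3 := by
  refine (hA.isBigO_tPow_add_sub_sum y (d := 3) (by omega)).congr_left fun h => ?_
  simp only [sum_range_succ, range_one, sum_singleton, Nat.choose_zero_right, Nat.choose_one_right,
    Nat.cast_one, one_mul, tMixed_zero, tMixed_one, tMixed_two, WithLp.ofLp_smul,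
    EuclideanSpace.inner_eq_star_dotProduct, star_trivial, dotProduct_comm, dotProduct_smul,
    smul_eq_mul]
  ring

variable {s : Finset ℕ} {B : (i : ℕ) → Tensor (i + 2) ι}

lemma hasGradientAt_sum_tPow (hB : ∀ i ∈ s, IsSupersymmetric (B i)) (y : 𝔼) :
    HasGradientAt (fun w : 𝔼 => ∑ i ∈ s, tPow (B i) w)
      (∑ i ∈ s, ((i + 2 : ℕ) : ℝ) • WithLp.toLp 2 (tVec (B i) y)) y := by
  rw [hasGradientAt_iff_hasFDerivAt, map_sum]
  exact HasFDerivAt.fun_sum fun i hi => ((hB i hi).hasGradientAt_tPow y).hasFDerivAt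

lemma isBigO_sum_tPow_add_sub_quadratic (hB : ∀ i ∈ s, IsSupersymmetric (B i)) (y : 𝔼) :
    (fun h : 𝔼 => ∑ i ∈ s, tPow (B i) (y + h) - ∑ i ∈ s, tPow (B i) y -
        inner ℝ (∑ i ∈ s, ((i + 2 : ℕ) : ℝ) • WithLp.toLp 2 (tVec (B i) y)) h -
        h ⬝ᵥ (∑ i ∈ s, (((i + 2) * (i + 1) : ℕ) : ℝ) • tMat (B i) y) *ᵥ h / 2) =O[𝓝 0]
      fun h => ‖h‖ ^ 3 := by
  refine (IsBigO.fun_sum fun i hi => (hB i hi).isBigO_tPow_add_sub_quadratic y).congr_left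
    fun h => ?_
  simp only [sum_inner, sum_mulVec, dotProduct_sum, smul_mulVec, dotProduct_smul, smul_eq_mul,
    sum_div, ← sum_sub_distrib, Nat.cast_choose_two]
  refine sum_congr rfl fun i _ => ?_
  push_cast
  ring

end TensorCalculus

section Stability

lemma sympJ_transpose (n : ℕ) : (sympJ n)ᵀ = -sympJ n := by
  simp [sympJ, fromBlocks_transpose, fromBlocks_neg]

lemma sympJ_mul_self (n : ℕ) : sympJ n * sympJ n = -1 := by
  simp [sympJ, fromBlocks_multiply, fromBlocks_neg, ← fromBlocks_one]

lemma eq_zero_of_sympJ_mulVec_eq_zero {n : ℕ} {v : Fin n ⊕ Fin n → ℝ}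
    (hv : sympJ n *ᵥ v = 0) : v = 0 := by
  simpa [mulVec_mulVec, sympJ_mul_self, neg_mulVec] using congrArg (sympJ n *ᵥ ·) hv

variable {ι : Type} [Fintype ι]

lemma dotProduct_mulVec_self_eq_zero_of_transpose_eq_neg {S : Matrix ι ι ℝ} (hS : Sᵀ = -S)
    (v : ι → ℝ) : v ⬝ᵥ S *ᵥ v = 0 := by
  have h : v ⬝ᵥ S *ᵥ v = -(v ⬝ᵥ S *ᵥ v) := by
    conv_lhs => rw [dotProduct_mulVec, ← mulVec_transpose, hS, dotProduct_comm]
    simp [neg_mulVec]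
  linarith

lemma conserved_of_hasDerivWithinAt_mulVec_gradient {S : Matrix ι ι ℝ} (hS : Sᵀ = -S)
    {H : EuclideanSpace ℝ ι → ℝ} (hH : Differentiable ℝ H) {x : ℝ → EuclideanSpace ℝ ι}
    (hx : ∀ t : ℝ, 0 ≤ t →
      HasDerivWithinAt x (WithLp.toLp 2 (S *ᵥ (gradient H (x t) : EuclideanSpace ℝ ι)))
        (Set.Ici 0) t)
    {t : ℝ} (ht : 0 ≤ t) : H (x t) = H (x 0) := by
  have hcont : ContinuousOn (H ∘ x) (Set.Icc 0 t) := hH.continuous.comp_continuousOn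
    fun u hu => (hx u hu.1).continuousWithinAt.mono Set.Icc_subset_Ici_self
  refine constant_of_has_deriv_right_zero hcont (fun u hu => ?_) t ⟨ht, le_rfl⟩
  have hflow := (hH (x u)).hasGradientAt.hasFDerivAt.comp_hasDerivWithinAt u
    ((hx u hu.1).mono (Set.Ici_subset_Ici.2 hu.1))
  rwa [InnerProductSpace.toDual_apply_apply, EuclideanSpace.inner_eq_star_dotProduct,
    star_trivial, WithLp.ofLp_toLp, dotProduct_comm,
    dotProduct_mulVec_self_eq_zero_of_transpose_eq_neg hS] at hflow

lemma Matrix.PosDef.exists_mul_norm_sq_le {M : Matrix ι ι ℝ} (hM : M.PosDef) :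
    ∃ c > 0, ∀ v : EuclideanSpace ℝ ι, c * ‖v‖ ^ 2 ≤ v ⬝ᵥ M *ᵥ v := by
  set q : EuclideanSpace ℝ ι → ℝ := fun v => v ⬝ᵥ M *ᵥ v
  have hq : Continuous q := by fun_prop
  have hsmul : ∀ (r : ℝ) v, q (r • v) = r ^ 2 * q v := by
    intro r v
    simp only [q, WithLp.ofLp_smul, mulVec_smul, dotProduct_smul, smul_dotProduct, smul_eq_mul]
    ring
  rcases subsingleton_or_nontrivial (EuclideanSpace ℝ ι) with _ | _
  · exact ⟨1, one_pos, fun v => by simp [Subsingleton.elim v 0]⟩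
  obtain ⟨u, hu, hmin⟩ := (isCompact_sphere (0 : EuclideanSpace ℝ ι) 1).exists_isMinOn
    (NormedSpace.sphere_nonempty.2 zero_le_one) hq.continuousOn
  have hu0 : u.ofLp ≠ 0 := by
    rintro hu0
    simp [(WithLp.ofLp_eq_zero 2).1 hu0] at hu
  refine ⟨q u, by simpa using hM.dotProduct_mulVec_pos hu0, fun v => ?_⟩
  rcases eq_or_ne v 0 with rfl | hv
  · simp [q]
  have hmem : ‖v‖⁻¹ • v ∈ Metric.sphere (0 : EuclideanSpace ℝ ι) 1 := by
    simp [norm_smul, hv]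
  calc q u * ‖v‖ ^ 2 ≤ q (‖v‖⁻¹ • v) * ‖v‖ ^ 2 := by gcongr; exact hmin hmem
    _ = q v := by
      rw [hsmul]
      field_simp

lemma exists_mul_norm_sq_le_abs_dotProduct_mulVec {M : Matrix ι ι ℝ}
    (hM : M.PosDef ∨ (-M).PosDef) :
    ∃ c > 0, ∀ v : EuclideanSpace ℝ ι, c * ‖v‖ ^ 2 ≤ |v ⬝ᵥ M *ᵥ v| := by
  rcases hM with hM | hM
  · obtain ⟨c, hc, hcM⟩ := hM.exists_mul_norm_sq_le
    exact ⟨c, hc, fun v => (hcM v).trans (le_abs_self _)⟩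
  · obtain ⟨c, hc, hcM⟩ := hM.exists_mul_norm_sq_le
    refine ⟨c, hc, fun v => (hcM v).trans ?_⟩
    rw [neg_mulVec, dotProduct_neg]
    exact neg_le_abs _

end Stability

lemma eventually_mul_norm_sq_le_abs_of_isBigO {E : Type*} [SeminormedAddCommGroup E]
    {f Q : E → ℝ} {c : ℝ} (hc : 0 < c) (hQ : ∀ h, c * ‖h‖ ^ 2 ≤ |Q h|)
    (hf : (fun h => f h - Q h) =O[𝓝 0] fun h => ‖h‖ ^ 3) :
    ∀ᶠ h in 𝓝 0, c / 2 * ‖h‖ ^ 2 ≤ |f h| := by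
  filter_upwards [(hf.trans_isLittleO (isLittleO_norm_pow_norm_pow (by norm_num : 2 < 3))).bound
    (half_pos hc)] with h hh
  rw [Real.norm_eq_abs, norm_pow, norm_norm] at hh
  have := abs_sub_abs_le_abs_sub (Q h) (f h)
  rw [abs_sub_comm] at this
  linarith [hQ h]

lemma lyapunovStable_of_conserved {E : Type*} [SeminormedAddCommGroup E] {V : E → ℝ} {ξ : E}
    {c : ℝ} (hc : 0 < c) (hV : ContinuousAt V ξ)
    (hgrowth : ∀ᶠ h in 𝓝 0, c * ‖h‖ ^ 2 ≤ |V (ξ + h) - V ξ|) {ε : ℝ} (hε : 0 < ε) :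
    ∃ δ > 0, ∀ x : ℝ → E, ContinuousOn x (Set.Ici 0) → (∀ t, 0 ≤ t → V (x t) = V (x 0)) →
      ‖x 0 - ξ‖ < δ → ∀ t, 0 ≤ t → ‖x t - ξ‖ < ε := by
  obtain ⟨r, hr, hgr⟩ := Metric.eventually_nhds_iff.1 hgrowth
  set ρ := min (ε / 2) (r / 2)
  have hρ : 0 < ρ := by positivity
  obtain ⟨δ, hδ, hVδ⟩ := Metric.continuousAt_iff.1 hV (c * ρ ^ 2) (by positivity)
  refine ⟨min δ ρ, by positivity, fun x hx hcons hx0 => ?_⟩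
  suffices hinside : ∀ t, 0 ≤ t → ‖x t - ξ‖ < ρ by
    intro t ht
    linarith [hinside t ht, min_le_left (ε / 2) (r / 2)]
  intro t ht
  by_contra! hge
  obtain ⟨t₁, ht₁, hρt₁⟩ := intermediate_value_Icc ht
    ((hx.mono Set.Icc_subset_Ici_self).sub continuousOn_const).norm
    ⟨(hx0.trans_le (min_le_right _ _)).le, hge⟩
  replace hρt₁ : ‖x t₁ - ξ‖ = ρ := hρt₁
  have hsphere : c * ρ ^ 2 ≤ |V (x 0) - V ξ| := by
    have := hgr (y := x t₁ - ξ) (by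
      rw [dist_zero_right, hρt₁]
      linarith [min_le_right (ε / 2) (r / 2)])
    rwa [add_sub_cancel, hρt₁, hcons t₁ ht₁.1] at this
  have hnear : |V (x 0) - V ξ| < c * ρ ^ 2 := by
    have hx0δ : dist (x 0) ξ < δ := by
      rw [dist_eq_norm]
      exact hx0.trans_le (min_le_left _ _)
    simpa [Real.dist_eq] using hVδ hx0δ
  linarith

/-- for the tensor-based polynomial Hamiltonian system `ẋ = J ∇H(x)` with
`H(x) = ∑_{i=0}^{m} B_i x^{i+2}` (the `B_i` supersymmetric of order `i + 2`, dimension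
`2n`), if `x*` is an equilibrium and the symmetric matrix
`∑_{i=0}^{m} (i+2)(i+1) B_i (x*)^i` is positive definite or negative definite, then `x*`
is a Lyapunov stable equilibrium. -/
theorem equilibrium_stable_of_hessian_definite (n m : ℕ)
    (B : (i : ℕ) → Tensor (i + 2) (Fin n ⊕ Fin n))
    (hB : ∀ i ≤ m, IsSupersymmetric (B i))
    (xstar : EuclideanSpace ℝ (Fin n ⊕ Fin n))
    (heq : (sympJ n).mulVec
        (gradient (fun w : EuclideanSpace ℝ (Fin n ⊕ Fin n) =>
            ∑ i ∈ Finset.range (m + 1), tPow (B i) w) xstar :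
          EuclideanSpace ℝ (Fin n ⊕ Fin n)) = 0)
    (hhess :
      (∑ i ∈ Finset.range (m + 1),
          ((((i + 2) * (i + 1) : ℕ) : ℝ)) • tMat (B i) xstar).PosDef ∨
      (-(∑ i ∈ Finset.range (m + 1),
          ((((i + 2) * (i + 1) : ℕ) : ℝ)) • tMat (B i) xstar)).PosDef) :
    ∀ ε > 0, ∃ δ > 0, ∀ x : ℝ → EuclideanSpace ℝ (Fin n ⊕ Fin n),
      (∀ t : ℝ, 0 ≤ t → HasDerivWithinAt x
          (WithLp.toLp 2 ((sympJ n).mulVec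
              (gradient (fun w : EuclideanSpace ℝ (Fin n ⊕ Fin n) =>
                  ∑ i ∈ Finset.range (m + 1), tPow (B i) w) (x t) :
                EuclideanSpace ℝ (Fin n ⊕ Fin n))) :
            EuclideanSpace ℝ (Fin n ⊕ Fin n))
          (Set.Ici 0) t) →
      ‖x 0 - xstar‖ < δ → ∀ t : ℝ, 0 ≤ t → ‖x t - xstar‖ < ε := by
  intro ε hε
  have hBsymm : ∀ i ∈ range (m + 1), IsSupersymmetric (B i) :=
    fun i hi => hB i (Nat.lt_succ_iff.1 (mem_range.1 hi))
  have hgrad := hasGradientAt_sum_tPow hBsymm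
  have hdiff : Differentiable ℝ (fun w : EuclideanSpace ℝ (Fin n ⊕ Fin n) =>
      ∑ i ∈ range (m + 1), tPow (B i) w) := fun y => (hgrad y).differentiableAt
  have hcrit : ∑ i ∈ range (m + 1), ((i + 2 : ℕ) : ℝ) • WithLp.toLp 2 (tVec (B i) xstar) = 0 := by
    rw [← (hgrad xstar).gradient, ← WithLp.ofLp_eq_zero 2]
    exact eq_zero_of_sympJ_mulVec_eq_zero heq
  have htaylor := isBigO_sum_tPow_add_sub_quadratic hBsymm xstar
  simp only [hcrit, inner_zero_left, sub_zero] at htaylor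
  obtain ⟨c, hc, hcM⟩ := exists_mul_norm_sq_le_abs_dotProduct_mulVec hhess
  have hgrowth := eventually_mul_norm_sq_le_abs_of_isBigO (half_pos hc)
    (fun h => by rw [abs_div, abs_two]; linarith [hcM h]) htaylor
  obtain ⟨δ, hδ, hstable⟩ := lyapunovStable_of_conserved (half_pos (half_pos hc))
    hdiff.continuous.continuousAt hgrowth hε
  exact ⟨δ, hδ, fun x hx => hstable x (fun t ht => (hx t ht).continuousWithinAt)
    fun t ht => conserved_of_hasDerivWithinAt_mulVec_gradient (sympJ_transpose n) hdiff hx ht⟩
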